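/- Let (X, σ) be a shift space with the strong specification property and let Y ⊂ X be a compact shift-invariant proper subset. Then h_top(Y) < h_top(X). More precisely, there exist constants C ≥ 1 (independent of α) and for any sufficiently small α > 0 the estimate h_top(X) ≥ h_top(Y) + (α/n)(−log α − log C) holds, where n is a fixed window size; choosing α small makes the second term positive. -/

import Mathlib

/-!
Since `Y` is closed and `Y ≠ X`, some word `w₀ ∈ L(X)` is not in `L(Y)`, hence occurs in no word
of `L(Y)`. Given a word `V` of `Y` of length `q r` (with `r = |w₀| + τ`) and a cut index `p < q`,
strong specification splices `w₀` into `V` after `p r` letters, with gaps of length `τ`, and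
appends the result to any word of `X`. The marker `w₀` can only sit where it was inserted, so
`p` is recovered and every `X`-word has `q · #L_{qr}(Y) ≥ q e^{h_Y q r}` distinct extensions of
length `q r + 3τ + |w₀|`. Hence `h_X (q r + 3τ + |w₀|) ≥ log q + h_Y q r`, which beats
`h_Y (q r + 3τ + |w₀|)` as soon as `log q > h_Y (3τ + |w₀|)`. The quantitative bound then holds
with `C = n = 1`, because `α log (1/α) → 0`.
-/

open Filter

/-- The left shift on one-sided sequences. -/
def shiftMap {A : Type*} (x : ℕ → A) : ℕ → A := fun n => x (n + 1)

/-- The language of `X`. -/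
def langL {A : Type*} (X : Set (ℕ → A)) : Set (List A) :=
  {w | ∃ x ∈ X, ∀ i : Fin w.length, x i.val = w.get i}

/-- The number of length-`n` words in the language of `X`. -/
noncomputable def wcount {A : Type*} (X : Set (ℕ → A)) (n : ℕ) : ℕ :=
  {w ∈ langL X | w.length = n}.ncard

open Topology Set

section Language

variable {A : Type*} {X Y : Set (ℕ → A)}

lemma shiftMap_iterate_apply (x : ℕ → A) (k n : ℕ) : shiftMap^[k] x n = x (n + k) := by
  induction k generalizing x with
  | zero => rfl
  | succ k ih => rw [Function.iterate_succ_apply, ih]; rfl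

lemma mem_langL_iff {w : List A} :
    w ∈ langL X ↔ ∃ x ∈ X, ∀ i (hi : i < w.length), x i = w[i] :=
  ⟨fun ⟨x, hx, h⟩ => ⟨x, hx, fun i hi => h ⟨i, hi⟩⟩,
    fun ⟨x, hx, h⟩ => ⟨x, hx, fun i => h i i.2⟩⟩

lemma langL_mono (h : Y ⊆ X) : langL Y ⊆ langL X :=
  fun _ ⟨x, hx, hw⟩ => ⟨x, h hx, hw⟩

lemma nil_mem_langL (h : X.Nonempty) : ([] : List A) ∈ langL X :=
  ⟨h.some, h.some_mem, fun i => i.elim0⟩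

lemma ofFn_mem_langL {x : ℕ → A} (hx : x ∈ X) (n : ℕ) :
    List.ofFn (fun i : Fin n => x i) ∈ langL X :=
  mem_langL_iff.2 ⟨x, hx, fun i hi => by simp⟩

lemma mem_langL_of_isInfix (hσ : MapsTo shiftMap Y Y) {v w : List A} (hv : v ∈ langL Y)
    (hwv : w <:+: v) : w ∈ langL Y := by
  obtain ⟨s, u, rfl⟩ := hwv
  obtain ⟨y, hy, hyv⟩ := mem_langL_iff.1 hv
  refine mem_langL_iff.2 ⟨shiftMap^[s.length] y, hσ.iterate _ hy, fun i hi => ?_⟩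
  rw [shiftMap_iterate_apply, Nat.add_comm, hyv _ (by simp; omega)]
  simp [List.getElem_append_right, List.getElem_append_left, hi]

lemma wcount_zero (h : X.Nonempty) : wcount X 0 = 1 := by
  have : {w ∈ langL X | w.length = 0} = {[]} := by
    ext w
    simpa [List.length_eq_zero_iff] using fun hw : w = [] => hw ▸ nil_mem_langL h
  rw [wcount, this, Set.ncard_singleton]

end Language

section Counting

variable {A : Type*} [Fintype A] {X Y : Set (ℕ → A)}

lemma finite_setOf_mem_langL_length_eq (X : Set (ℕ → A)) (n : ℕ) :
    {w ∈ langL X | w.length = n}.Finite :=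
  (List.finite_length_eq A n).subset fun _ hw => hw.2

lemma wcount_pos (h : X.Nonempty) (n : ℕ) : 0 < wcount X n := by
  obtain ⟨x, hx⟩ := h
  exact (Set.ncard_pos (finite_setOf_mem_langL_length_eq X n)).2
    ⟨_, ofFn_mem_langL hx n, List.length_ofFn⟩

lemma wcount_add_le_mul (hσ : MapsTo shiftMap Y Y) (a b : ℕ) :
    wcount Y (a + b) ≤ wcount Y a * wcount Y b := by
  rw [wcount, wcount, wcount, ← Set.ncard_prod]
  refine Set.ncard_le_ncard_of_injOn (fun w => (w.take a, w.drop a)) ?_ ?_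
    ((finite_setOf_mem_langL_length_eq Y a).prod (finite_setOf_mem_langL_length_eq Y b))
  · rintro w ⟨hw, hl⟩
    exact ⟨⟨mem_langL_of_isInfix hσ hw (List.take_prefix a w).isInfix, by simp [hl]⟩,
      mem_langL_of_isInfix hσ hw (List.drop_suffix a w).isInfix, by simp [hl]⟩
  · intro w₁ _ w₂ _ h
    simp only [Prod.mk.injEq] at h
    rw [← List.take_append_drop a w₁, h.1, h.2, List.take_append_drop]

lemma wcount_mul_le_pow (hσ : MapsTo shiftMap Y Y) (hne : Y.Nonempty) (ℓ m : ℕ) :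
    wcount Y (m * ℓ) ≤ wcount Y ℓ ^ m := by
  induction m with
  | zero => simp [wcount_zero hne]
  | succ m ih =>
    calc wcount Y ((m + 1) * ℓ) = wcount Y (m * ℓ + ℓ) := by rw [Nat.succ_mul]
      _ ≤ wcount Y (m * ℓ) * wcount Y ℓ := wcount_add_le_mul hσ _ _
      _ ≤ wcount Y ℓ ^ m * wcount Y ℓ := Nat.mul_le_mul_right _ ih
      _ = wcount Y ℓ ^ (m + 1) := (pow_succ _ _).symm

variable {β : Type*} {S : Set β} {D : ℕ}

/-- Distinct extensions of distinct words are distinct, since a word is recovered from any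
of its extensions as a prefix of known length. -/
lemma wcount_mul_ncard_le
    (hext : ∀ W ∈ langL X, ∃ f : β → List A, InjOn f S ∧
      ∀ b ∈ S, f b ∈ langL X ∧ (f b).length = W.length + D ∧ W <+: f b) (N : ℕ) :
    wcount X N * S.ncard ≤ wcount X (N + D) := by
  choose! F hinj hF using hext
  rw [wcount, wcount, ← Set.ncard_prod]
  refine Set.ncard_le_ncard_of_injOn (fun z => F z.1 z.2) ?_ ?_
    (finite_setOf_mem_langL_length_eq X _)
  · rintro ⟨W, b⟩ ⟨⟨hW, rfl⟩, hb⟩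
    exact ⟨(hF W hW b hb).1, (hF W hW b hb).2.1⟩
  · rintro ⟨W, b⟩ ⟨⟨hW, hWl⟩, hb⟩ ⟨W', b'⟩ ⟨⟨hW', hW'l⟩, hb'⟩ h
    have hWW' : W = W' := by
      rw [List.prefix_iff_eq_take.1 (hF W hW b hb).2.2,
        List.prefix_iff_eq_take.1 (hF W' hW' b' hb').2.2, hWl, hW'l]
      exact congrArg (List.take N) h
    subst hWW'
    exact Prod.ext rfl (hinj W hW hb hb' h)

lemma ncard_pow_le_wcount (hne : X.Nonempty)
    (hext : ∀ W ∈ langL X, ∃ f : β → List A, InjOn f S ∧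
      ∀ b ∈ S, f b ∈ langL X ∧ (f b).length = W.length + D ∧ W <+: f b) (s : ℕ) :
    S.ncard ^ s ≤ wcount X (s * D) := by
  induction s with
  | zero => simp [wcount_zero hne]
  | succ s ih =>
    calc S.ncard ^ (s + 1) = S.ncard ^ s * S.ncard := pow_succ _ _
      _ ≤ wcount X (s * D) * S.ncard := Nat.mul_le_mul_right _ ih
      _ ≤ wcount X (s * D + D) := wcount_mul_ncard_le hext _
      _ = wcount X ((s + 1) * D) := by rw [Nat.succ_mul]

end Counting

section GrowthRate

variable {u : ℕ → ℝ} {h : ℝ} {D : ℕ}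

lemma tendsto_log_comp_mul_div (hu : Tendsto (fun n : ℕ => Real.log (u n) / n) atTop (𝓝 h))
    (hD : 0 < D) :
    Tendsto (fun s : ℕ => Real.log (u (s * D)) / s) atTop (𝓝 (h * D)) := by
  refine ((hu.comp (tendsto_id.atTop_mul_const' hD)).mul_const (D : ℝ)).congr' ?_
  filter_upwards [eventually_ne_atTop 0] with s hs
  simp only [Function.comp_apply, id, Nat.cast_mul]
  field_simp

lemma mul_le_log_of_le_pow (hu : Tendsto (fun n : ℕ => Real.log (u n) / n) atTop (𝓝 h))
    (hD : 0 < D) (hpos : ∀ n, 0 < u n) {K : ℝ} (hK : ∀ s, u (s * D) ≤ K ^ s) :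
    h * D ≤ Real.log K := by
  refine le_of_tendsto (tendsto_log_comp_mul_div hu hD) ?_
  filter_upwards [eventually_gt_atTop 0] with s hs
  rw [div_le_iff₀ (by exact_mod_cast hs), mul_comm (Real.log K), ← Real.log_pow]
  exact Real.log_le_log (hpos _) (hK s)

lemma log_le_mul_of_pow_le (hu : Tendsto (fun n : ℕ => Real.log (u n) / n) atTop (𝓝 h))
    (hD : 0 < D) {K : ℝ} (hK0 : 0 < K) (hK : ∀ s, K ^ s ≤ u (s * D)) :
    Real.log K ≤ h * D := by
  refine ge_of_tendsto (tendsto_log_comp_mul_div hu hD) ?_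
  filter_upwards [eventually_gt_atTop 0] with s hs
  rw [le_div_iff₀ (by exact_mod_cast hs), mul_comm (Real.log K), ← Real.log_pow]
  exact Real.log_le_log (by positivity) (hK s)

end GrowthRate

lemma exists_mem_langL_not_mem_langL {A : Type*} [TopologicalSpace A] [DiscreteTopology A]
    {X Y : Set (ℕ → A)} (hYX : Y ⊆ X) (hYcl : IsClosed Y) (hne : Y ≠ X) :
    ∃ w ∈ langL X, w ∉ langL Y := by
  obtain ⟨x, hxX, hxY⟩ := Set.exists_of_ssubset (hYX.ssubset_of_ne hne)
  obtain ⟨-, ⟨x', n, rfl⟩, hx, hsub⟩ := (PiNat.isTopologicalBasis_cylinders _).mem_nhds_iff.1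
    (hYcl.isOpen_compl.mem_nhds hxY)
  rw [PiNat.mem_cylinder_iff_eq] at hx
  refine ⟨_, ofFn_mem_langL hxX n, fun ⟨y, hyY, hy⟩ => hsub ?_ hyY⟩
  rw [← hx]
  exact fun i hi => by simpa using hy ⟨i, by simpa⟩

section Splicing

variable {A : Type*}

def spliceAt (g₁ g₂ g₃ w₀ V : List A) (k : ℕ) : List A :=
  g₁ ++ V.take k ++ g₂ ++ w₀ ++ g₃ ++ V.drop k

variable {g₁ g₂ g₃ g₁' g₂' g₃' w₀ V V' : List A} {k k' : ℕ}

lemma isInfix_of_spliceAt_eq (h : spliceAt g₁ g₂ g₃ w₀ V k = spliceAt g₁' g₂' g₃' w₀ V' k')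
    (hg₁ : g₁.length = g₁'.length) (hk : k + g₂.length + w₀.length ≤ k')
    (hk' : k' ≤ V'.length) : w₀ <:+: V' := by
  simp only [spliceAt, List.append_assoc] at h
  obtain ⟨-, h⟩ := List.append_inj h hg₁
  have hpre : V.take k ++ g₂ ++ w₀ <+: V'.take k' :=
    List.prefix_of_prefix_length_le ⟨g₃ ++ V.drop k, by simpa using h⟩
      (List.prefix_append _ _) (by simp; omega)
  exact (List.suffix_append _ _).isInfix.trans
    (hpre.isInfix.trans (List.take_prefix _ _).isInfix)

lemma eq_of_spliceAt_eq (h : spliceAt g₁ g₂ g₃ w₀ V k = spliceAt g₁' g₂' g₃' w₀ V' k)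
    (hg₁ : g₁.length = g₁'.length) (hg₂ : g₂.length = g₂'.length)
    (hg₃ : g₃.length = g₃'.length) (hV : V.length = V'.length) : V = V' := by
  simp only [spliceAt, List.append_assoc] at h
  obtain ⟨-, h⟩ := List.append_inj h hg₁
  obtain ⟨hA, h⟩ := List.append_inj h (by simp [hV])
  obtain ⟨-, h⟩ := List.append_inj h hg₂
  obtain ⟨-, h⟩ := List.append_inj h rfl
  obtain ⟨-, hB⟩ := List.append_inj h hg₃
  rw [← List.take_append_drop k V, hA, hB, List.take_append_drop]

/-- A pair `(V, p)` stands for the word `V` cut after `p * r` letters. -/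
def cutWords (Y : Set (ℕ → A)) (q r : ℕ) : Set (List A × ℕ) :=
  {V ∈ langL Y | V.length = q * r} ×ˢ Iio q

lemma ncard_cutWords (Y : Set (ℕ → A)) (q r : ℕ) :
    (cutWords Y q r).ncard = wcount Y (q * r) * q := by
  simp [cutWords, Set.ncard_prod, wcount]

variable {X Y : Set (ℕ → A)} {τ q r : ℕ}

def HasStrongSpec (X : Set (ℕ → A)) (τ : ℕ) : Prop :=
  ∀ v ∈ langL X, ∀ w ∈ langL X, ∃ u ∈ langL X, u.length = τ ∧ v ++ u ++ w ∈ langL X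

lemma injOn_spliceAt (hσ : MapsTo shiftMap Y Y) (hw₀Y : w₀ ∉ langL Y) (hr : w₀.length + τ ≤ r)
    {g₁ g₂ g₃ : List A × ℕ → List A}
    (hg : ∀ b ∈ cutWords Y q r, (g₁ b).length = τ ∧ (g₂ b).length = τ ∧ (g₃ b).length = τ) :
    InjOn (fun b => spliceAt (g₁ b) (g₂ b) (g₃ b) w₀ b.1 (b.2 * r)) (cutWords Y q r) := by
  rintro ⟨V, p⟩ hb ⟨V', p'⟩ hb' h
  obtain ⟨⟨hV, hVl⟩, hp⟩ := hb
  obtain ⟨⟨hV', hV'l⟩, hp'⟩ := hb'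
  obtain ⟨h₁, h₂, h₃⟩ := hg _ ⟨⟨hV, hVl⟩, hp⟩
  obtain ⟨h₁', h₂', h₃'⟩ := hg _ ⟨⟨hV', hV'l⟩, hp'⟩
  simp only at h
  have hfar : ∀ {p p' : ℕ}, p < p' → p * r + τ + w₀.length ≤ p' * r := fun hlt => by
    nlinarith [Nat.mul_le_mul_right r hlt]
  rcases lt_trichotomy p p' with hlt | rfl | hgt
  · refine absurd (mem_langL_of_isInfix hσ hV' (isInfix_of_spliceAt_eq h ?_ ?_ ?_)) hw₀Y
    · rw [h₁, h₁']
    · rw [h₂]; exact hfar hlt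
    · rw [hV'l]; exact Nat.mul_le_mul_right r hp'.le
  · rw [eq_of_spliceAt_eq h (by rw [h₁, h₁']) (by rw [h₂, h₂']) (by rw [h₃, h₃'])
      (by rw [hVl, hV'l])]
  · refine absurd (mem_langL_of_isInfix hσ hV (isInfix_of_spliceAt_eq h.symm ?_ ?_ ?_)) hw₀Y
    · rw [h₁, h₁']
    · rw [h₂']; exact hfar hgt
    · rw [hVl]; exact Nat.mul_le_mul_right r hp.le

lemma exists_gaps (hspec : HasStrongSpec X τ) {W A₁ A₂ A₃ : List A} (hW : W ∈ langL X)
    (h₁ : A₁ ∈ langL X) (h₂ : A₂ ∈ langL X) (h₃ : A₃ ∈ langL X) :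
    ∃ g₁ g₂ g₃ : List A, g₁.length = τ ∧ g₂.length = τ ∧ g₃.length = τ ∧
      W ++ g₁ ++ A₁ ++ g₂ ++ A₂ ++ g₃ ++ A₃ ∈ langL X := by
  obtain ⟨g₁, -, hg₁, h₁⟩ := hspec W hW A₁ h₁
  obtain ⟨g₂, -, hg₂, h₂⟩ := hspec _ h₁ A₂ h₂
  obtain ⟨g₃, -, hg₃, h₃⟩ := hspec _ h₂ A₃ h₃
  exact ⟨g₁, g₂, g₃, hg₁, hg₂, hg₃, h₃⟩

lemma exists_injOn_extensions (hspec : HasStrongSpec X τ)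
    (hYX : Y ⊆ X) (hσ : MapsTo shiftMap Y Y) (hw₀X : w₀ ∈ langL X) (hw₀Y : w₀ ∉ langL Y)
    (hr : w₀.length + τ ≤ r) {W : List A} (hW : W ∈ langL X) :
    ∃ f : List A × ℕ → List A, InjOn f (cutWords Y q r) ∧ ∀ b ∈ cutWords Y q r,
      f b ∈ langL X ∧ (f b).length = W.length + (q * r + 3 * τ + w₀.length) ∧ W <+: f b := by
  have hgaps : ∀ b ∈ cutWords Y q r, ∃ g₁ g₂ g₃ : List A,
      g₁.length = τ ∧ g₂.length = τ ∧ g₃.length = τ ∧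
        W ++ g₁ ++ b.1.take (b.2 * r) ++ g₂ ++ w₀ ++ g₃ ++ b.1.drop (b.2 * r) ∈ langL X :=
    fun b hb => exists_gaps hspec hW
      (langL_mono hYX (mem_langL_of_isInfix hσ hb.1.1 (List.take_prefix _ _).isInfix)) hw₀X
      (langL_mono hYX (mem_langL_of_isInfix hσ hb.1.1 (List.drop_suffix _ _).isInfix))
  choose! g₁ g₂ g₃ hg₁ hg₂ hg₃ hmem using hgaps
  refine ⟨fun b => W ++ spliceAt (g₁ b) (g₂ b) (g₃ b) w₀ b.1 (b.2 * r),
    fun b hb b' hb' h => injOn_spliceAt hσ hw₀Y hr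
      (fun b hb => ⟨hg₁ b hb, hg₂ b hb, hg₃ b hb⟩) hb hb' (List.append_cancel_left h),
    fun b hb => ⟨?_, ?_, List.prefix_append _ _⟩⟩
  · simpa only [spliceAt, List.append_assoc] using hmem b hb
  · have hcut : b.2 * r ≤ b.1.length := hb.1.2 ▸ Nat.mul_le_mul_right r (le_of_lt hb.2)
    simp only [spliceAt, List.length_append, List.length_take, List.length_drop, hg₁ b hb,
      hg₂ b hb, hg₃ b hb]
    rw [← hb.1.2]
    omega

end Splicing

section Entropy

variable {A : Type*} [Fintype A] {X Y : Set (ℕ → A)} {τ : ℕ} {w₀ : List A} {hX hY : ℝ}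

theorem entropy_lt_of_not_mem_langL (hspec : HasStrongSpec X τ)
    (hYX : Y ⊆ X) (hYne : Y.Nonempty) (hσ : MapsTo shiftMap Y Y)
    (hw₀X : w₀ ∈ langL X) (hw₀Y : w₀ ∉ langL Y)
    (hhX : Tendsto (fun n : ℕ => Real.log (wcount X n) / n) atTop (𝓝 hX))
    (hhY : Tendsto (fun n : ℕ => Real.log (wcount Y n) / n) atTop (𝓝 hY)) :
    hY < hX := by
  have ht : 0 < w₀.length := List.length_pos_iff.2 fun h => hw₀Y (h ▸ nil_mem_langL hYne)
  set r := w₀.length + τ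
  set q := ⌈Real.exp (hY * (3 * τ + w₀.length) + 1)⌉₊
  have hq : hY * (3 * τ + w₀.length) < Real.log q := by
    calc hY * (3 * τ + w₀.length) < hY * (3 * τ + w₀.length) + 1 := lt_add_one _
      _ = Real.log (Real.exp (hY * (3 * τ + w₀.length) + 1)) := (Real.log_exp _).symm
      _ ≤ Real.log q := Real.log_le_log (Real.exp_pos _) (Nat.le_ceil _)
  have hq0 : 0 < q := Nat.ceil_pos.2 (Real.exp_pos _)
  have hqr : 0 < q * r := Nat.mul_pos hq0 (by omega)
  have hYqr : hY * (q * r : ℕ) ≤ Real.log (wcount Y (q * r)) :=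
    mul_le_log_of_le_pow hhY hqr (fun n => by exact_mod_cast wcount_pos hYne n)
      fun m => by exact_mod_cast wcount_mul_le_pow hσ hYne (q * r) m
  have hcount : ∀ s, (wcount Y (q * r) * q) ^ s ≤ wcount X (s * (q * r + 3 * τ + w₀.length)) :=
    ncard_cutWords Y q r ▸ ncard_pow_le_wcount (hYne.mono hYX)
      fun W hW => exists_injOn_extensions hspec hYX hσ hw₀X hw₀Y le_rfl hW
  have hXD : Real.log (wcount Y (q * r) * q) ≤ hX * (q * r + 3 * τ + w₀.length : ℕ) :=
    log_le_mul_of_pow_le hhX (by omega)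
      (by have := wcount_pos hYne (q * r); positivity) fun s => by exact_mod_cast hcount s
  rw [Real.log_mul (by exact_mod_cast (wcount_pos hYne _).ne') (by positivity)] at hXD
  push_cast at hYqr hXD
  have hD : (0 : ℝ) ≤ q * r + 3 * τ + w₀.length := by positivity
  exact lt_of_mul_lt_mul_right (by linarith) hD

end Entropy

lemma exists_pos_forall_mul_neg_log_lt {ε : ℝ} (hε : 0 < ε) :
    ∃ δ > 0, ∀ α : ℝ, 0 < α → α < δ → α * -Real.log α < ε := by
  obtain ⟨δ, hδ, hball⟩ :=
    Metric.continuousAt_iff.1 Real.continuous_negMulLog.continuousAt ε hε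
  refine ⟨δ, hδ, fun α hα hαδ => ?_⟩
  have := hball (by rwa [Real.dist_0_eq_abs, abs_of_pos hα])
  rw [Real.negMulLog_zero, Real.dist_eq, sub_zero, Real.negMulLog] at this
  linarith [le_abs_self (-α * Real.log α)]

theorem stmt_15_general {A : Type*} [Fintype A] [TopologicalSpace A] [DiscreteTopology A]
    (X Y : Set (ℕ → A))
    (hYX : Y ⊆ X) (hYne : Y.Nonempty) (hYcl : IsClosed Y)
    (hYinv : shiftMap '' Y = Y) (hproper : Y ≠ X)
    (τ : ℕ)
    (hspec : ∀ v ∈ langL X, ∀ w ∈ langL X,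
      ∃ u ∈ langL X, u.length = τ ∧ v ++ u ++ w ∈ langL X)
    (hX hY : ℝ)
    (hhX : Tendsto (fun n : ℕ => Real.log (wcount X n) / n) atTop (nhds hX))
    (hhY : Tendsto (fun n : ℕ => Real.log (wcount Y n) / n) atTop (nhds hY)) :
    hY < hX ∧
    ∃ C : ℝ, 1 ≤ C ∧ ∃ n : ℕ, 1 ≤ n ∧ ∃ α₀ : ℝ, 0 < α₀ ∧
      ∀ α : ℝ, 0 < α → α < α₀ →
        hY + (α / n) * (-Real.log α - Real.log C) ≤ hX := by
  obtain ⟨w₀, hw₀X, hw₀Y⟩ := exists_mem_langL_not_mem_langL hYX hYcl hproper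
  have hlt : hY < hX := entropy_lt_of_not_mem_langL hspec hYX hYne
    (mapsTo_iff_image_subset.2 hYinv.subset) hw₀X hw₀Y hhX hhY
  obtain ⟨δ, hδ, hsmall⟩ := exists_pos_forall_mul_neg_log_lt (sub_pos.2 hlt)
  refine ⟨hlt, 1, le_rfl, 1, le_rfl, δ, hδ, fun α hα hαδ => ?_⟩
  simp only [Nat.cast_one, div_one, Real.log_one, sub_zero]
  linarith [hsmall α hα hαδ]

/-- Entropy production: if `X` is a shift space with strong specification
and `Y ⊊ X` is a nonempty compact shift-invariant proper subset, then
`h_top(Y) < h_top(X)`; more precisely there are `C ≥ 1` and a window size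
`n` so that for all sufficiently small `α > 0`,
`h_top(X) ≥ h_top(Y) + (α/n)(−log α − log C)`. -/
theorem stmt_15 {A : Type*} [Fintype A] [TopologicalSpace A] [DiscreteTopology A]
    (X Y : Set (ℕ → A)) (hXne : X.Nonempty) (hXcl : IsClosed X)
    (hXinv : shiftMap '' X = X)
    (hYX : Y ⊆ X) (hYne : Y.Nonempty) (hYcl : IsClosed Y)
    (hYinv : shiftMap '' Y = Y) (hproper : Y ≠ X)
    (τ : ℕ)
    (hspec : ∀ v ∈ langL X, ∀ w ∈ langL X,
      ∃ u ∈ langL X, u.length = τ ∧ v ++ u ++ w ∈ langL X)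
    (hX hY : ℝ)
    (hhX : Tendsto (fun n : ℕ => Real.log (wcount X n) / n) atTop (nhds hX))
    (hhY : Tendsto (fun n : ℕ => Real.log (wcount Y n) / n) atTop (nhds hY)) :
    hY < hX ∧
    ∃ C : ℝ, 1 ≤ C ∧ ∃ n : ℕ, 1 ≤ n ∧ ∃ α₀ : ℝ, 0 < α₀ ∧
      ∀ α : ℝ, 0 < α → α < α₀ →
        hY + (α / n) * (-Real.log α - Real.log C) ≤ hX :=
  stmt_15_general X Y hYX hYne hYcl hYinv hproper τ hspec hX hY hhX hhY
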